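/- Let n ≥ 1. The game of Snort played on the star K_{1,n} whose centre is tinted Blue and whose n leaves are untinted is equivalent to the game {n | *} if n is even, and to the game {n | 0} if n is odd. -/

import Mathlib

/-! `SetTheory.PGame` is no longer in Mathlib: it is restated here with its old meaning. -/

namespace SetTheory

universe u

/-- Combinatorial pregames (as in Mathlib's former `SetTheory.PGame`). -/
inductive PGame : Type (u + 1)
  | mk : ∀ α β : Type u, (α → PGame) → (β → PGame) → PGame

namespace PGame

/-- Negation of pregames: swap the roles of Left and Right. -/
def neg : PGame.{u} → PGame.{u}
  | mk l r L R => mk r l (fun i => neg (R i)) (fun i => neg (L i))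

instance : Neg PGame.{u} := ⟨neg⟩

instance : Zero PGame.{u} := ⟨mk PEmpty PEmpty PEmpty.elim PEmpty.elim⟩

instance : One PGame.{u} := ⟨mk PUnit PEmpty (fun _ => 0) PEmpty.elim⟩

/-- Sum of pregames. -/
noncomputable def add (x : PGame.{u}) : PGame.{u} → PGame.{u} := by
  induction x with
  | mk xl xr _ _ IHxl IHxr =>
    intro y
    induction y with
    | mk yl yr yL yR IHyl IHyr =>
      exact mk (xl ⊕ yl) (xr ⊕ yr)
        (Sum.rec (fun i => IHxl i (mk yl yr yL yR)) (fun i => IHyl i))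
        (Sum.rec (fun i => IHxr i (mk yl yr yL yR)) (fun i => IHyr i))

noncomputable instance : Add PGame.{u} := ⟨add⟩

noncomputable instance : NatCast PGame.{u} := ⟨Nat.unaryCast⟩

/-- The game `* = {0 | 0}`. -/
def star : PGame.{u} := mk PUnit PUnit (fun _ => 0) (fun _ => 0)

/-- The pair `(x ≤ y, x ⧏ y)`, defined by simultaneous recursion. -/
noncomputable def leLF (x : PGame.{u}) : PGame.{u} → Prop × Prop := by
  induction x with
  | mk xl xr _ _ IHxl IHxr =>
    intro y
    induction y with
    | mk yl yr yL yR IHyl IHyr =>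
      exact ((∀ i, (IHxl i (mk yl yr yL yR)).2) ∧ (∀ j, (IHyr j).2),
        (∃ i, (IHyl i).1) ∨ (∃ j, (IHxr j (mk yl yr yL yR)).1))

instance : LE PGame.{u} := ⟨fun x y => (leLF x y).1⟩

/-- Equivalence of pregames: `x ≤ y ∧ y ≤ x`. -/
instance : HasEquiv PGame.{u} := ⟨fun x y => x ≤ y ∧ y ≤ x⟩

end PGame

end SetTheory


namespace SetTheory

namespace PGame

universe u

/-- The type of left moves. -/
def LeftMoves : PGame.{u} → Type u
  | mk l _ _ _ => l

/-- The type of right moves. -/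
def RightMoves : PGame.{u} → Type u
  | mk _ r _ _ => r

/-- The left option. -/
def moveLeft : ∀ g : PGame.{u}, LeftMoves g → PGame.{u}
  | mk _ _ L _ => L

/-- The right option. -/
def moveRight : ∀ g : PGame.{u}, RightMoves g → PGame.{u}
  | mk _ _ _ R => R

@[simp] theorem moveLeft_mk {xl xr : Type u} {xL : xl → PGame.{u}} {xR : xr → PGame.{u}} {i : xl} :
    (mk xl xr xL xR).moveLeft i = xL i := rfl

@[simp] theorem moveRight_mk {xl xr : Type u} {xL : xl → PGame.{u}} {xR : xr → PGame.{u}} {j : xr} :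
    (mk xl xr xL xR).moveRight j = xR j := rfl

/-- The less-or-fuzzy relation. -/
def LF (x y : PGame.{u}) : Prop := (leLF x y).2

theorem mk_le_mk {xl xr : Type u} {xL : xl → PGame.{u}} {xR : xr → PGame.{u}}
    {yl yr : Type u} {yL : yl → PGame.{u}} {yR : yr → PGame.{u}} :
    mk xl xr xL xR ≤ mk yl yr yL yR ↔
      (∀ i, LF (xL i) (mk yl yr yL yR)) ∧ ∀ j, LF (mk xl xr xL xR) (yR j) := Iff.rfl

theorem mk_lf_mk {xl xr : Type u} {xL : xl → PGame.{u}} {xR : xr → PGame.{u}}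
    {yl yr : Type u} {yL : yl → PGame.{u}} {yR : yr → PGame.{u}} :
    LF (mk xl xr xL xR) (mk yl yr yL yR) ↔
      (∃ i, mk xl xr xL xR ≤ yL i) ∨ ∃ j, xR j ≤ mk yl yr yL yR := Iff.rfl

theorem le_iff_forall_lf {x y : PGame.{u}} :
    x ≤ y ↔ (∀ i, LF (x.moveLeft i) y) ∧ ∀ j, LF x (y.moveRight j) := by
  cases x; cases y; exact mk_le_mk

theorem lf_iff_exists_le {x y : PGame.{u}} :
    LF x y ↔ (∃ i, x ≤ y.moveLeft i) ∨ ∃ j, x.moveRight j ≤ y := by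
  cases x; cases y; exact mk_lf_mk

theorem lf_of_le_moveLeft {x y : PGame.{u}} {i : y.LeftMoves} (h : x ≤ y.moveLeft i) : LF x y :=
  lf_iff_exists_le.2 (Or.inl ⟨i, h⟩)

theorem lf_of_moveRight_le {x y : PGame.{u}} {j : x.RightMoves} (h : x.moveRight j ≤ y) :
    LF x y :=
  lf_iff_exists_le.2 (Or.inr ⟨j, h⟩)

theorem le_iff_not_lf_aux (x y : PGame.{u}) : (x ≤ y ↔ ¬ LF y x) ∧ (y ≤ x ↔ ¬ LF x y) := by
  induction x generalizing y with
  | mk xl xr xL xR IHxl IHxr =>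
    induction y with
    | mk yl yr yL yR IHyl IHyr =>
      have e1 : ∀ i, LF (xL i) (mk yl yr yL yR) ↔ ¬ mk yl yr yL yR ≤ xL i := fun i => by
        rw [(IHxl i _).2, not_not]
      have e2 : ∀ j, LF (mk xl xr xL xR) (yR j) ↔ ¬ yR j ≤ mk xl xr xL xR := fun j => by
        rw [(IHyr j).2, not_not]
      have e3 : ∀ j, LF (yL j) (mk xl xr xL xR) ↔ ¬ mk xl xr xL xR ≤ yL j := fun j => by
        rw [(IHyl j).1, not_not]
      have e4 : ∀ i, LF (mk yl yr yL yR) (xR i) ↔ ¬ xR i ≤ mk yl yr yL yR := fun i => by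
        rw [(IHxr i _).1, not_not]
      rw [mk_le_mk, mk_le_mk, mk_lf_mk, mk_lf_mk]
      simp only [e1, e2, e3, e4, not_or, not_exists]
      exact ⟨trivial, trivial⟩

theorem not_le {x y : PGame.{u}} : ¬ x ≤ y ↔ LF y x := by
  rw [(le_iff_not_lf_aux x y).1, not_not]

theorem not_lf {x y : PGame.{u}} : ¬ LF x y ↔ y ≤ x :=
  (le_iff_not_lf_aux x y).2.symm

theorem le_refl' (x : PGame.{u}) : x ≤ x := by
  induction x with
  | mk xl xr xL xR IHl IHr =>
    exact le_iff_forall_lf.2 ⟨fun i => lf_of_le_moveLeft (i := i) (IHl i),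
      fun j => lf_of_moveRight_le (j := j) (IHr j)⟩

theorem le_trans_aux {x y z : PGame.{u}}
    (h₁ : ∀ {i}, y ≤ z → z ≤ x.moveLeft i → y ≤ x.moveLeft i)
    (h₂ : ∀ {j}, z.moveRight j ≤ x → x ≤ y → z.moveRight j ≤ y) (hxy : x ≤ y) (hyz : y ≤ z) :
    x ≤ z :=
  le_iff_forall_lf.2
    ⟨fun i => not_le.1 fun h => (not_lf.2 (h₁ hyz h)) ((le_iff_forall_lf.1 hxy).1 i),
    fun j => not_le.1 fun h => (not_lf.2 (h₂ h hxy)) ((le_iff_forall_lf.1 hyz).2 j)⟩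

theorem le_trans_triple (x y z : PGame.{u}) :
    (x ≤ y → y ≤ z → x ≤ z) ∧ (y ≤ z → z ≤ x → y ≤ x) ∧ (z ≤ x → x ≤ y → z ≤ y) := by
  induction x generalizing y z with
  | mk xl xr xL xR IHxl IHxr =>
  induction y generalizing z with
  | mk yl yr yL yR IHyl IHyr =>
  induction z with
  | mk zl zr zL zR IHzl IHzr =>
  exact ⟨le_trans_aux (fun {i} => (IHxl i _ _).2.1) (fun {j} => (IHzr j).2.2),
    le_trans_aux (fun {i} => (IHyl i _).2.2) (fun {j} => (IHxr j _ _).1),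
    le_trans_aux (fun {i} => (IHzl i).1) (fun {j} => (IHyr j _).2.1)⟩

instance : Preorder PGame.{u} where
  le x y := x ≤ y
  le_refl := le_refl'
  le_trans x y z := (le_trans_triple x y z).1
  lt x y := x ≤ y ∧ LF x y
  lt_iff_le_not_ge x y := by
    show x ≤ y ∧ LF x y ↔ x ≤ y ∧ ¬ y ≤ x
    rw [not_le]

theorem lt_iff_le_and_lf {x y : PGame.{u}} : x < y ↔ x ≤ y ∧ LF x y := Iff.rfl

theorem lf_of_lt {x y : PGame.{u}} (h : x < y) : LF x y := h.2

theorem lf_of_le_of_lf {x y z : PGame.{u}} (h₁ : x ≤ y) (h₂ : LF y z) : LF x z :=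
  not_le.1 fun h => not_le.2 h₂ (le_trans h h₁)

theorem lf_of_lf_of_le {x y z : PGame.{u}} (h₁ : LF x y) (h₂ : y ≤ z) : LF x z :=
  not_le.1 fun h => not_le.2 h₁ (le_trans h₂ h)

theorem lf_congr_left {x₁ y₁ x₂ : PGame.{u}} (hx : x₁ ≈ y₁) : LF x₁ x₂ ↔ LF y₁ x₂ := by
  have hx' : x₁ ≤ y₁ ∧ y₁ ≤ x₁ := hx
  exact ⟨fun h => lf_of_le_of_lf hx'.2 h, fun h => lf_of_le_of_lf hx'.1 h⟩

theorem lf_congr_right {x₁ x₂ y₂ : PGame.{u}} (hy : x₂ ≈ y₂) : LF x₁ x₂ ↔ LF x₁ y₂ := by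
  have hy' : x₂ ≤ y₂ ∧ y₂ ≤ x₂ := hy
  exact ⟨fun h => lf_of_lf_of_le h hy'.1, fun h => lf_of_lf_of_le h hy'.2⟩

theorem star_moveLeft (x : LeftMoves star.{u}) : (star.{u}).moveLeft x = 0 := rfl

theorem star_moveRight (x : RightMoves star.{u}) : (star.{u}).moveRight x = 0 := rfl

theorem star_fuzzy_zero : LF star.{u} 0 ∧ LF 0 star.{u} :=
  ⟨lf_of_moveRight_le (x := star) (j := PUnit.unit) (le_refl' 0),
    lf_of_le_moveLeft (y := star) (i := PUnit.unit) (le_refl' 0)⟩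

theorem one_moveLeft (x : LeftMoves (1 : PGame.{u})) : (1 : PGame.{u}).moveLeft x = 0 := rfl

theorem leftMoves_add (x y : PGame.{u}) : (x + y).LeftMoves = (x.LeftMoves ⊕ y.LeftMoves) := by
  cases x; cases y; rfl

theorem rightMoves_add (x y : PGame.{u}) :
    (x + y).RightMoves = (x.RightMoves ⊕ y.RightMoves) := by
  cases x; cases y; rfl

/-- Left moves of a sum. -/
def toLeftMovesAdd {x y : PGame.{u}} : x.LeftMoves ⊕ y.LeftMoves ≃ (x + y).LeftMoves :=
  Equiv.cast (leftMoves_add x y).symm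

theorem add_moveLeft_inl {x : PGame.{u}} (y : PGame.{u}) (i : x.LeftMoves) :
    (x + y).moveLeft (toLeftMovesAdd (Sum.inl i)) = x.moveLeft i + y := by
  cases x; cases y; rfl

theorem add_moveLeft_inr (x : PGame.{u}) {y : PGame.{u}} (i : y.LeftMoves) :
    (x + y).moveLeft (toLeftMovesAdd (Sum.inr i)) = x + y.moveLeft i := by
  cases x; cases y; rfl

theorem leftMoves_add_cases {x y : PGame.{u}} (k) {P : (x + y).LeftMoves → Prop}
    (hl : ∀ i, P (toLeftMovesAdd (Sum.inl i))) (hr : ∀ i, P (toLeftMovesAdd (Sum.inr i))) :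
    P k := by
  rw [← toLeftMovesAdd.apply_symm_apply k]
  rcases toLeftMovesAdd.symm k with i | i
  · exact hl i
  · exact hr i

theorem add_zero_equiv (x : PGame.{u}) : x + 0 ≈ x := by
  induction x with
  | mk xl xr xL xR IHl IHr =>
    have h1 : mk xl xr xL xR + 0 ≤ mk xl xr xL xR := by
      rw [le_iff_forall_lf]
      refine ⟨fun k => ?_, fun j => ?_⟩
      · rcases k with i | i
        · exact lf_of_le_moveLeft (i := i) (IHl i).1
        · exact i.elim
      · exact lf_of_moveRight_le (x := mk xl xr xL xR + 0) (j := Sum.inl j) (IHr j).1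
    have h2 : mk xl xr xL xR ≤ mk xl xr xL xR + 0 := by
      rw [le_iff_forall_lf]
      refine ⟨fun i => ?_, fun k => ?_⟩
      · exact lf_of_le_moveLeft (y := mk xl xr xL xR + 0) (i := Sum.inl i) (IHl i).2
      · rcases k with j | j
        · exact lf_of_moveRight_le (j := j) (IHr j).2
        · exact j.elim
    exact ⟨h1, h2⟩

theorem add_zero_le_add_one (x : PGame.{u}) : x + 0 ≤ x + 1 := by
  induction x with
  | mk xl xr xL xR IHl IHr =>
    rw [le_iff_forall_lf]
    refine ⟨fun k => ?_, fun k => ?_⟩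
    · rcases k with i | i
      · exact lf_of_le_moveLeft (y := mk xl xr xL xR + 1) (i := Sum.inl i) (IHl i)
      · exact i.elim
    · rcases k with j | j
      · exact lf_of_moveRight_le (x := mk xl xr xL xR + 0) (j := Sum.inl j) (IHr j)
      · exact j.elim

theorem add_le_add_right_aux (x y z : PGame.{u}) :
    (x ≤ y → x + z ≤ y + z) ∧ (LF x y → LF (x + z) (y + z)) := by
  induction x generalizing y z with
  | mk xl xr xL xR IHxl IHxr =>
  induction y generalizing z with
  | mk yl yr yL yR IHyl IHyr =>
  induction z with
  | mk zl zr zL zR IHzl IHzr =>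
  constructor
  · intro h
    rw [le_iff_forall_lf]
    refine ⟨fun k => ?_, fun k => ?_⟩
    · rcases k with i | k
      · exact (IHxl i _ _).2 ((le_iff_forall_lf.1 h).1 i)
      · exact lf_of_le_moveLeft (y := mk yl yr yL yR + mk zl zr zL zR) (i := Sum.inr k)
          ((IHzl k).1 h)
    · rcases k with j | k
      · exact (IHyr j _).2 ((le_iff_forall_lf.1 h).2 j)
      · exact lf_of_moveRight_le (x := mk xl xr xL xR + mk zl zr zL zR) (j := Sum.inr k)
          ((IHzr k).1 h)
  · intro h
    rcases lf_iff_exists_le.1 h with ⟨i, hi⟩ | ⟨j, hj⟩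
    · exact lf_of_le_moveLeft (y := mk yl yr yL yR + mk zl zr zL zR) (i := Sum.inl i)
        ((IHyl i _).1 hi)
    · exact lf_of_moveRight_le (x := mk xl xr xL xR + mk zl zr zL zR) (j := Sum.inl j)
        ((IHxr j _ _).1 hj)

theorem add_le_add_right {x y : PGame.{u}} (h : x ≤ y) (z : PGame.{u}) : x + z ≤ y + z :=
  (add_le_add_right_aux x y z).1 h

instance isEmpty_zero_leftMoves : IsEmpty (LeftMoves (0 : PGame.{u})) :=
  inferInstanceAs (IsEmpty PEmpty)

instance isEmpty_zero_rightMoves : IsEmpty (RightMoves (0 : PGame.{u})) :=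
  inferInstanceAs (IsEmpty PEmpty)

theorem nat_succ (n : ℕ) : ((n + 1 : ℕ) : PGame.{u}) = (n : PGame.{u}) + 1 := rfl

instance isEmpty_natCast_rightMoves (n : ℕ) : IsEmpty (RightMoves (n : PGame.{u})) := by
  induction n with
  | zero => exact inferInstanceAs (IsEmpty PEmpty)
  | succ m ih =>
    haveI : IsEmpty (RightMoves (1 : PGame.{u})) := inferInstanceAs (IsEmpty PEmpty)
    rw [nat_succ, rightMoves_add]
    infer_instance

end PGame

end SetTheory

open SetTheory

namespace SnortFormal

/-- The state of a vertex in a Snort position: untinted (`free`), tinted Blue,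
tinted Red, or removed from play (`dead`). -/
inductive Cell : Type
  | free | blue | red | dead
deriving DecidableEq

/-- The effect on a neighbouring cell of Left playing next to it:
it becomes tinted Blue, and if it was tinted Red it is removed. -/
def tintB : Cell → Cell
  | .free => .blue
  | .blue => .blue
  | .red  => .dead
  | .dead => .dead

/-- The effect on a neighbouring cell of Right playing next to it. -/
def tintR : Cell → Cell
  | .free => .red
  | .blue => .dead
  | .red  => .red
  | .dead => .dead

/-- The position resulting from Left playing on vertex `v`: `v` is removed and
all of its neighbours are tinted Blue (doubly-tinted vertices are removed). -/
def moveL {V : Type} [DecidableEq V] (G : SimpleGraph V) [DecidableRel G.Adj]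
    (c : V → Cell) (v : V) : V → Cell :=
  fun w => if w = v then .dead else if G.Adj v w then tintB (c w) else c w

/-- The position resulting from Right playing on vertex `v`. -/
def moveR {V : Type} [DecidableEq V] (G : SimpleGraph V) [DecidableRel G.Adj]
    (c : V → Cell) (v : V) : V → Cell :=
  fun w => if w = v then .dead else if G.Adj v w then tintR (c w) else c w

/-- The vertices still present in the position. -/
def aliveSet {V : Type} [Fintype V] (c : V → Cell) : Finset V :=
  Finset.univ.filter (fun v => c v ≠ Cell.dead)

theorem alive_move_lt {V : Type} [Fintype V] [DecidableEq V]
    (G : SimpleGraph V) [DecidableRel G.Adj] (c : V → Cell) (v : V)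
    (hv : c v ≠ Cell.dead) (f : Cell → Cell) (hf : f Cell.dead = Cell.dead) :
    (aliveSet (fun w => if w = v then Cell.dead else if G.Adj v w then f (c w) else c w)).card
      < (aliveSet c).card := by
  apply Finset.card_lt_card
  constructor
  · intro w hw
    simp only [aliveSet, Finset.mem_filter, Finset.mem_univ, true_and] at hw ⊢
    by_cases h : w = v
    · simp [h] at hw
    · simp only [h, if_false] at hw
      by_cases hadj : G.Adj v w
      · simp only [hadj, if_true] at hw
        intro hd
        rw [hd, hf] at hw
        exact hw rfl
      · simpa [hadj] using hw
  · intro hsub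
    have hv' : v ∈ aliveSet c := by
      simp [aliveSet, hv]
    have := hsub hv'
    simp [aliveSet] at this

/-- The combinatorial pregame given by playing Snort on the graph `G` with
tinting `c`. Left may play on any vertex that is free or tinted Blue; Right
may play on any vertex that is free or tinted Red. -/
def snort {V : Type} [Fintype V] [DecidableEq V] (G : SimpleGraph V) [DecidableRel G.Adj]
    (c : V → Cell) : PGame :=
  PGame.mk {v : V // c v = Cell.free ∨ c v = Cell.blue}
    {v : V // c v = Cell.free ∨ c v = Cell.red}
    (fun v => snort G (moveL G c v.1))
    (fun v => snort G (moveR G c v.1))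
termination_by (aliveSet c).card
decreasing_by
  · exact alive_move_lt G c v.1 (by rcases v.2 with h | h <;> simp [h]) tintB rfl
  · exact alive_move_lt G c v.1 (by rcases v.2 with h | h <;> simp [h]) tintR rfl

/-- Build a simple graph from a (not necessarily symmetric) Boolean adjacency
function by symmetrizing and removing loops. -/
def graphOfBool {W : Type} (f : W → W → Bool) : SimpleGraph W where
  Adj u v := u ≠ v ∧ (f u v ∨ f v u)
  symm := ⟨fun _ _ ⟨h1, h2⟩ => ⟨h1.symm, h2.symm⟩⟩
  loopless := ⟨fun _ h => h.1 rfl⟩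

instance {W : Type} [DecidableEq W] (f : W → W → Bool) :
    DecidableRel (graphOfBool f).Adj :=
  fun u v => inferInstanceAs (Decidable (u ≠ v ∧ (f u v ∨ f v u)))

/-- The game `{A | B}` with unique Left option `A` and unique Right option `B`. -/
def ofPair (A B : PGame) : PGame :=
  PGame.mk PUnit PUnit (fun _ => A) (fun _ => B)

/-- The game `±{A, B} = {A, B | −A, −B}`. -/
def pmPair (A B : PGame) : PGame :=
  PGame.mk Bool Bool (fun x => if x then A else B) (fun x => if x then -A else -B)


/-- `s(n)`: the game `0` if `n` is even and `* = {0 | 0}` if `n` is odd. -/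
def sgame (n : ℕ) : PGame := if Even n then 0 else PGame.star

/-- The star `K_{1,n}`: centre `none`, leaves `some i`. -/
abbrev starGraph (n : ℕ) : SimpleGraph (Option (Fin n)) :=
  graphOfBool (fun u v =>
    match u, v with
    | none, some _ => true
    | _, _ => false)

theorem snort_eq {V : Type} [Fintype V] [DecidableEq V] (G : SimpleGraph V)
    [DecidableRel G.Adj] (c : V → Cell) :
    snort G c = PGame.mk {v : V // c v = Cell.free ∨ c v = Cell.blue}
      {v : V // c v = Cell.free ∨ c v = Cell.red}
      (fun v => snort G (moveL G c v.1))
      (fun v => snort G (moveR G c v.1)) := by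
  rw [snort]

theorem aliveSet_update {V : Type} [Fintype V] [DecidableEq V] (c : V → Cell) (v : V) :
    aliveSet (fun w => if w = v then Cell.dead else c w) = (aliveSet c).erase v := by
  ext w
  simp only [aliveSet, Finset.mem_filter, Finset.mem_univ, true_and, Finset.mem_erase]
  split_ifs with h
  · simp [h]
  · simp [h]

theorem alive_update_lt {V : Type} [Fintype V] [DecidableEq V] (c : V → Cell) (v : V)
    (hv : c v ≠ Cell.dead) :
    (aliveSet (fun w => if w = v then Cell.dead else c w)).card < (aliveSet c).card := by
  rw [aliveSet_update]
  exact Finset.card_erase_lt_of_mem (by simp [aliveSet, hv])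

theorem natCast_succ_moveLeft :
    ∀ (n : ℕ) (i : (((n : ℕ) : PGame) + 1).LeftMoves),
      (((n : ℕ) : PGame) + 1).moveLeft i ≤ ((n : ℕ) : PGame) := by
  intro n
  induction n with
  | zero =>
    intro i
    refine PGame.leftMoves_add_cases (P := fun i => (((0 : ℕ) : PGame) + 1).moveLeft i ≤ ((0 : ℕ) : PGame)) i ?_ ?_
    · intro j
      haveI : IsEmpty ((0 : ℕ) : PGame).LeftMoves := inferInstanceAs (IsEmpty PEmpty)
      exact isEmptyElim j
    · intro j
      rw [PGame.add_moveLeft_inr, PGame.one_moveLeft]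
      exact (PGame.add_zero_equiv _).1
  | succ m ih =>
    intro i
    refine PGame.leftMoves_add_cases (P := fun i => ((((m + 1 : ℕ) : ℕ) : PGame) + 1).moveLeft i ≤ (((m + 1 : ℕ) : ℕ) : PGame)) i ?_ ?_
    · intro j
      rw [PGame.add_moveLeft_inl]
      exact PGame.add_le_add_right (ih j) 1
    · intro j
      rw [PGame.add_moveLeft_inr, PGame.one_moveLeft]
      exact (PGame.add_zero_equiv _).1

theorem natCast_le_natCast : ∀ {m n : ℕ}, m ≤ n → (m : PGame) ≤ (n : PGame) := by
  intro m n h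
  induction h with
  | refl => exact le_rfl
  | @step k _ ih =>
    refine ih.trans ?_
    calc ((k : ℕ) : PGame) ≤ (k : PGame) + 0 := (PGame.add_zero_equiv _).2
      _ ≤ (k : PGame) + 1 := PGame.add_zero_le_add_one _
      _ = ((k + 1 : ℕ) : PGame) := (PGame.nat_succ k).symm

theorem natCast_lt_natCast {m n : ℕ} (h : m < n) : (m : PGame) < (n : PGame) := by
  have h1 : (m : PGame) < ((m + 1 : ℕ) : PGame) := by
    rw [PGame.lt_iff_le_and_lf]
    refine ⟨natCast_le_natCast (Nat.le_succ m), ?_⟩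
    apply PGame.lf_of_le_moveLeft
      (i := (PGame.toLeftMovesAdd (Sum.inr PUnit.unit) : ((m : PGame) + 1).LeftMoves))
    rw [PGame.add_moveLeft_inr (y := 1) (i := PUnit.unit), PGame.one_moveLeft PUnit.unit]
    exact (PGame.add_zero_equiv _).2
  exact h1.trans_le (natCast_le_natCast h)

theorem snort_le_card {V : Type} [Fintype V] [DecidableEq V] (G : SimpleGraph V)
    [DecidableRel G.Adj] (c : V → Cell) :
    snort G c ≤ (((aliveSet c).card : ℕ) : PGame) := by
  rw [snort_eq, PGame.le_iff_forall_lf]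
  constructor
  · rintro ⟨v, hv⟩
    simp only [PGame.moveLeft_mk]
    have hvd : c v ≠ Cell.dead := by rcases hv with h | h <;> simp [h]
    have hlt : (aliveSet (moveL G c v)).card < (aliveSet c).card :=
      alive_move_lt G c v hvd tintB rfl
    exact PGame.lf_of_lt ((snort_le_card G (moveL G c v)).trans_lt (natCast_lt_natCast hlt))
  · intro j
    exact isEmptyElim j
termination_by (aliveSet c).card
decreasing_by exact alive_move_lt G c v hvd tintB rfl

theorem snort_blue {V : Type} [Fintype V] [DecidableEq V] (G : SimpleGraph V)
    [DecidableRel G.Adj] (c : V → Cell)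
    (hc : ∀ v, c v = Cell.blue ∨ c v = Cell.dead) :
    snort G c ≈ (((Finset.univ.filter (fun v => c v = Cell.blue)).card : ℕ) : PGame) := by
  have hmL : ∀ v, moveL G c v = fun w => if w = v then Cell.dead else c w := by
    intro v; funext w
    simp only [moveL]
    split_ifs with h1 h2
    · rfl
    · rcases hc w with h | h <;> rw [h] <;> rfl
    · rfl
  haveI hR : IsEmpty {v : V // c v = Cell.free ∨ c v = Cell.red} := by
    constructor
    rintro ⟨v, hv⟩
    rcases hc v with h' | h' <;> simp [h'] at hv
  have hfree : ∀ {v : V}, (c v = Cell.free ∨ c v = Cell.blue) → c v = Cell.blue := by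
    intro v hv
    rcases hc v with h' | h'
    · exact h'
    · simp [h'] at hv
  have req : ∀ v, c v = Cell.blue →
      snort G (moveL G c v) ≈
        ((((Finset.univ.filter (fun w => c w = Cell.blue)).erase v).card : ℕ) : PGame) := by
    intro v hv
    rw [hmL v]
    have hc' : ∀ w, (if w = v then Cell.dead else c w) = Cell.blue ∨
        (if w = v then Cell.dead else c w) = Cell.dead := by
      intro w
      split_ifs with h
      · exact Or.inr rfl
      · exact hc w
    have h2 := snort_blue G (fun w => if w = v then Cell.dead else c w) hc'
    have hset : Finset.univ.filter
        (fun w => (if w = v then Cell.dead else c w) = Cell.blue)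
        = (Finset.univ.filter (fun w => c w = Cell.blue)).erase v := by
      ext w
      simp only [Finset.mem_filter, Finset.mem_univ, true_and, Finset.mem_erase]
      split_ifs with h
      · simp [h]
      · simp [h]
    rwa [hset] at h2
  rw [snort_eq]
  constructor
  · rw [PGame.le_iff_forall_lf]
    constructor
    · rintro ⟨v, hv⟩
      simp only [PGame.moveLeft_mk]
      have hv' : c v = Cell.blue := hfree hv
      have hvs : v ∈ Finset.univ.filter (fun w => c w = Cell.blue) := by simp [hv']
      refine (PGame.lf_congr_left (req v hv')).mpr ?_
      exact PGame.lf_of_lt (natCast_lt_natCast (Finset.card_erase_lt_of_mem hvs))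
    · intro j
      exact isEmptyElim j
  · rw [PGame.le_iff_forall_lf]
    refine ⟨?_, fun j => hR.elim j⟩
    rcases Nat.eq_zero_or_pos (Finset.univ.filter (fun v => c v = Cell.blue)).card
      with h0 | hpos
    · rw [h0]
      intro i
      haveI : IsEmpty ((0 : ℕ) : PGame).LeftMoves := inferInstanceAs (IsEmpty PEmpty)
      exact isEmptyElim i
    · obtain ⟨v, hvs⟩ := Finset.card_pos.1 hpos
      have hv' : c v = Cell.blue := (Finset.mem_filter.1 hvs).2
      have hcard : (Finset.univ.filter (fun w => c w = Cell.blue)).card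
          = ((Finset.univ.filter (fun w => c w = Cell.blue)).erase v).card + 1 := by
        rw [Finset.card_erase_of_mem hvs]
        exact (Nat.succ_pred_eq_of_pos hpos).symm
      rw [hcard]
      intro i
      apply PGame.lf_of_le_moveLeft (y := PGame.mk _ _ _ _)
        (i := (⟨v, Or.inr hv'⟩ : {v : V // c v = Cell.free ∨ c v = Cell.blue}))
      simp only [PGame.moveLeft_mk]
      exact (natCast_succ_moveLeft _ i).trans (req v hv').2
termination_by (aliveSet c).card
decreasing_by exact alive_update_lt c v (by simp [hv]) 

theorem snort_free {V : Type} [Fintype V] [DecidableEq V] (G : SimpleGraph V)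
    [DecidableRel G.Adj] (c : V → Cell)
    (hc : ∀ v, c v = Cell.free ∨ c v = Cell.dead)
    (hind : ∀ v w, c v ≠ Cell.dead → c w ≠ Cell.dead → ¬ G.Adj v w) :
    snort G c ≈ sgame (Finset.univ.filter (fun v => c v = Cell.free)).card := by
  have hm : ∀ (f : Cell → Cell), f Cell.dead = Cell.dead → ∀ v, c v ≠ Cell.dead →
      (fun w => if w = v then Cell.dead else if G.Adj v w then f (c w) else c w)
        = fun w => if w = v then Cell.dead else c w := by
    intro f hf v hv
    funext w
    split_ifs with h1 h2
    · rfl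
    · rcases hc w with h | h
      · exact absurd h2 (hind v w hv (by simp [h]))
      · rw [h, hf]
    · rfl
  have hfreeL : ∀ {v : V}, (c v = Cell.free ∨ c v = Cell.blue) → c v = Cell.free := by
    intro v hv
    rcases hc v with h' | h'
    · exact h'
    · simp [h'] at hv
  have hfreeR : ∀ {v : V}, (c v = Cell.free ∨ c v = Cell.red) → c v = Cell.free := by
    intro v hv
    rcases hc v with h' | h'
    · exact h'
    · simp [h'] at hv
  have hmL : ∀ v, c v ≠ Cell.dead → moveL G c v
      = fun w => if w = v then Cell.dead else c w := fun v hv => hm tintB rfl v hv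
  have hmR : ∀ v, c v ≠ Cell.dead → moveR G c v
      = fun w => if w = v then Cell.dead else c w := fun v hv => hm tintR rfl v hv
  have req : ∀ v, c v = Cell.free →
      snort G (fun w => if w = v then Cell.dead else c w)
        ≈ sgame ((Finset.univ.filter (fun w => c w = Cell.free)).erase v).card := by
    intro v hv
    have hc' : ∀ w, (if w = v then Cell.dead else c w) = Cell.free ∨
        (if w = v then Cell.dead else c w) = Cell.dead := by
      intro w
      split_ifs with h
      · exact Or.inr rfl
      · exact hc w
    have hind' : ∀ x w, (if x = v then Cell.dead else c x) ≠ Cell.dead →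
        (if w = v then Cell.dead else c w) ≠ Cell.dead → ¬ G.Adj x w := by
      intro x w hx hw
      split_ifs at hx hw
      all_goals first
      | exact absurd rfl hx
      | exact absurd rfl hw
      | exact hind x w hx hw
    have h2 := snort_free G (fun w => if w = v then Cell.dead else c w) hc' hind'
    have hset : Finset.univ.filter
        (fun w => (if w = v then Cell.dead else c w) = Cell.free)
        = (Finset.univ.filter (fun w => c w = Cell.free)).erase v := by
      ext w
      simp only [Finset.mem_filter, Finset.mem_univ, true_and, Finset.mem_erase]
      split_ifs with h
      · simp [h]
      · simp [h]
    rwa [hset] at h2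
  set s := Finset.univ.filter (fun v => c v = Cell.free) with hs
  rw [snort_eq]
  rcases Nat.eq_zero_or_pos s.card with h0 | hpos
  · haveI hL : IsEmpty {v : V // c v = Cell.free ∨ c v = Cell.blue} := by
      constructor
      rintro ⟨v, hv⟩
      have h1 : v ∈ s := by simp [hs, hfreeL hv]
      rw [Finset.card_eq_zero] at h0
      simp [h0] at h1
    haveI hRe : IsEmpty {v : V // c v = Cell.free ∨ c v = Cell.red} := by
      constructor
      rintro ⟨v, hv⟩
      have h1 : v ∈ s := by simp [hs, hfreeR hv]
      rw [Finset.card_eq_zero] at h0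
      simp [h0] at h1
    rw [h0]
    show _ ≈ sgame 0
    rw [sgame, if_pos (Even.zero)]
    constructor
    · rw [PGame.le_iff_forall_lf]
      exact ⟨fun i => hL.elim i, fun j => isEmptyElim j⟩
    · rw [PGame.le_iff_forall_lf]
      exact ⟨fun i => isEmptyElim i, fun j => hRe.elim j⟩
  · obtain ⟨v₀, hv₀s⟩ := Finset.card_pos.1 hpos
    have hv₀ : c v₀ = Cell.free := by
      rw [hs] at hv₀s
      exact (Finset.mem_filter.1 hv₀s).2
    have hercard : ∀ v ∈ s, (s.erase v).card = s.card - 1 := by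
      intro v hv
      exact Finset.card_erase_of_mem hv
    by_cases hpar : Even s.card
    · -- sgame s.card = 0, options are star
      have hopt : ∀ v ∈ s, ¬ Even (s.erase v).card := by
        intro v hv
        rw [hercard v hv]
        rcases hpar with ⟨t, ht⟩
        rintro ⟨u, hu⟩
        omega
      rw [sgame, if_pos hpar]
      constructor
      · rw [PGame.le_iff_forall_lf]
        constructor
        · rintro ⟨v, hv⟩
          simp only [PGame.moveLeft_mk]
          have hvf := hfreeL hv
          have hvs : v ∈ s := by simp [hs, hvf]
          rw [hmL v (by simp [hvf])]
          refine (PGame.lf_congr_left (req v hvf)).mpr ?_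
          rw [sgame, if_neg (hopt v hvs)]
          exact PGame.star_fuzzy_zero.1
        · intro j
          exact isEmptyElim j
      · rw [PGame.le_iff_forall_lf]
        constructor
        · intro i
          exact isEmptyElim i
        · rintro ⟨v, hv⟩
          simp only [PGame.moveRight_mk]
          have hvf := hfreeR hv
          have hvs : v ∈ s := by simp [hs, hvf]
          rw [hmR v (by simp [hvf])]
          refine (PGame.lf_congr_right (req v hvf)).mpr ?_
          rw [sgame, if_neg (hopt v hvs)]
          exact PGame.star_fuzzy_zero.2
    · -- sgame s.card = star, options are 0
      have hopt : ∀ v ∈ s, Even (s.erase v).card := by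
        intro v hv
        rw [hercard v hv]
        rcases Nat.even_or_odd s.card with h | h
        · exact absurd h hpar
        · rcases h with ⟨t, ht⟩
          exact ⟨t, by omega⟩
      rw [sgame, if_neg hpar]
      constructor
      · rw [PGame.le_iff_forall_lf]
        constructor
        · rintro ⟨v, hv⟩
          simp only [PGame.moveLeft_mk]
          have hvf := hfreeL hv
          have hvs : v ∈ s := by simp [hs, hvf]
          rw [hmL v (by simp [hvf])]
          apply PGame.lf_of_le_moveLeft (y := PGame.star) (i := PUnit.unit)
          rw [PGame.star_moveLeft PUnit.unit]
          have := (req v hvf).1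
          rwa [sgame, if_pos (hopt v hvs)] at this
        · intro j
          apply PGame.lf_of_moveRight_le (x := PGame.mk _ _ _ _)
            (j := (⟨v₀, Or.inl hv₀⟩ : {v : V // c v = Cell.free ∨ c v = Cell.red}))
          simp only [PGame.moveRight_mk]
          rw [hmR v₀ (by simp [hv₀]), PGame.star_moveRight]
          have := (req v₀ hv₀).1
          rwa [sgame, if_pos (hopt v₀ hv₀s)] at this
      · rw [PGame.le_iff_forall_lf]
        constructor
        · intro i
          apply PGame.lf_of_le_moveLeft (y := PGame.mk _ _ _ _)
            (i := (⟨v₀, Or.inl hv₀⟩ : {v : V // c v = Cell.free ∨ c v = Cell.blue}))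
          simp only [PGame.moveLeft_mk]
          rw [hmL v₀ (by simp [hv₀]), PGame.star_moveLeft]
          have := (req v₀ hv₀).2
          rwa [sgame, if_pos (hopt v₀ hv₀s)] at this
        · rintro ⟨v, hv⟩
          simp only [PGame.moveRight_mk]
          have hvf := hfreeR hv
          have hvs : v ∈ s := by simp [hs, hvf]
          rw [hmR v (by simp [hvf])]
          apply PGame.lf_of_moveRight_le (x := PGame.star) (j := PUnit.unit)
          rw [PGame.star_moveRight PUnit.unit]
          have := (req v hvf).2
          rwa [sgame, if_pos (hopt v hvs)] at this
termination_by (aliveSet c).card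
decreasing_by exact alive_update_lt c v (by simp [hv])

/-- Snort on `K_{1,n}` with centre tinted Blue is `{n | *}` if `n`
is even and `{n | 0}` if `n` is odd. -/
theorem snort_star_blue_centre (n : ℕ) (hn : 1 ≤ n) :
    snort (starGraph n)
        (fun v => match v with | none => Cell.blue | some _ => Cell.free)
      ≈ (if Even n then ofPair (n : PGame) PGame.star else ofPair (n : PGame) 0) := by
  set c0 : Option (Fin n) → Cell :=
    fun v => match v with | none => Cell.blue | some _ => Cell.free with hc0
  have hadj1 : ∀ i : Fin n, (starGraph n).Adj none (some i) :=
    fun i => ⟨by simp, Or.inl rfl⟩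
  have hadjN : ∀ i : Fin n, (starGraph n).Adj (some i) none :=
    fun i => (hadj1 i).symm
  have hadj2 : ∀ i j : Fin n, ¬ (starGraph n).Adj (some i) (some j) := by
    rintro i j ⟨hne, h | h⟩ <;> simp at h
  -- Left option at the centre: everything becomes blue, value n
  have emL0 : ∀ v, moveL (starGraph n) c0 none v
      = (match v with | none => Cell.dead | some _ => Cell.blue) := by
    intro v
    cases v with
    | none => simp [moveL]
    | some i =>
      simp only [moveL]
      rw [if_neg (by simp), if_pos (hadj1 i)]
      rfl
  have hA : snort (starGraph n) (moveL (starGraph n) c0 none) ≈ ((n : ℕ) : PGame) := by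
    have h1 := snort_blue (starGraph n) (moveL (starGraph n) c0 none) ?_
    · have hset : Finset.univ.filter
          (fun v => moveL (starGraph n) c0 none v = Cell.blue)
          = Finset.univ.erase none := by
        ext v
        cases v <;> simp [emL0]
      rwa [hset, Finset.card_erase_of_mem (Finset.mem_univ _), Finset.card_univ,
        Fintype.card_option, Fintype.card_fin, Nat.add_sub_cancel] at h1
    · intro v
      rw [emL0]
      cases v with
      | none => exact Or.inr rfl
      | some i => exact Or.inl rfl
  -- Left option at a leaf: bounded above by n
  have hGi : ∀ i : Fin n,
      snort (starGraph n) (moveL (starGraph n) c0 (some i)) ≤ ((n : ℕ) : PGame) := by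
    intro i
    have hb := snort_le_card (starGraph n) (moveL (starGraph n) c0 (some i))
    have emLi : ∀ v, (moveL (starGraph n) c0 (some i) v = Cell.dead ↔ v = some i) := by
      intro v
      cases v with
      | none =>
        simp only [moveL]
        rw [if_neg (by simp), if_pos (hadjN i)]
        simp [tintB]
      | some j =>
        by_cases h : j = i
        · subst h; simp [moveL]
        · simp only [moveL]
          rw [if_neg (by simpa using h), if_neg (hadj2 i j)]
          simp [h]
    have hset : aliveSet (moveL (starGraph n) c0 (some i))
        = Finset.univ.erase (some i) := by
      ext v
      simp only [aliveSet, Finset.mem_filter, Finset.mem_univ, true_and, Finset.mem_erase,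
        and_true, ne_eq, emLi]
    rwa [hset, Finset.card_erase_of_mem (Finset.mem_univ _), Finset.card_univ,
      Fintype.card_option, Fintype.card_fin, Nat.add_sub_cancel] at hb
  -- Right option at a leaf
  have emRi : ∀ (i : Fin n) (v), moveR (starGraph n) c0 (some i) v
      = (match v with
         | none => Cell.dead
         | some j => if j = i then Cell.dead else Cell.free) := by
    intro i v
    cases v with
    | none =>
      simp only [moveR]
      rw [if_neg (by simp), if_pos (hadjN i)]
      rfl
    | some j =>
      by_cases h : j = i
      · subst h; simp [moveR]
      · simp only [moveR]
        rw [if_neg (by simpa using h), if_neg (hadj2 i j)]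
        simp [h, hc0]
  have hBi : ∀ i : Fin n,
      snort (starGraph n) (moveR (starGraph n) c0 (some i)) ≈ sgame (n - 1) := by
    intro i
    have hhc : ∀ v, moveR (starGraph n) c0 (some i) v = Cell.free ∨
        moveR (starGraph n) c0 (some i) v = Cell.dead := by
      intro v
      rw [emRi i v]
      cases v with
      | none => exact Or.inr rfl
      | some j =>
        by_cases h : j = i
        · simp [h]
        · simp [h]
    have hhind : ∀ v w, moveR (starGraph n) c0 (some i) v ≠ Cell.dead →
        moveR (starGraph n) c0 (some i) w ≠ Cell.dead → ¬ (starGraph n).Adj v w := by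
      intro v w hv hw
      rw [emRi i v] at hv
      rw [emRi i w] at hw
      cases v with
      | none => simp at hv
      | some a =>
        cases w with
        | none => simp at hw
        | some b => exact hadj2 a b
    have h2 := snort_free (starGraph n) (moveR (starGraph n) c0 (some i)) hhc hhind
    have hset : Finset.univ.filter
        (fun v => moveR (starGraph n) c0 (some i) v = Cell.free)
        = (Finset.univ.erase (none : Option (Fin n))).erase (some i) := by
      ext v
      cases v with
      | none => simp [emRi]
      | some j =>
        by_cases h : j = i
        · simp [emRi, h]
        · simp [emRi, h]
    have hmem : (some i) ∈ (Finset.univ.erase (none : Option (Fin n))) :=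
      Finset.mem_erase.2 ⟨by simp, Finset.mem_univ _⟩
    rwa [hset, Finset.card_erase_of_mem hmem,
      Finset.card_erase_of_mem (Finset.mem_univ _), Finset.card_univ,
      Fintype.card_option, Fintype.card_fin, Nat.add_sub_cancel] at h2
  -- rewrite the RHS
  have hq : Even (n - 1) ↔ ¬ Even n := by
    rw [Nat.even_sub hn]
    simp [Nat.not_even_one]
  have hrhs : (if Even n then ofPair (n : PGame) PGame.star else ofPair (n : PGame) 0)
      = ofPair ((n : ℕ) : PGame) (sgame (n - 1)) := by
    by_cases h : Even n
    · rw [if_pos h, sgame, if_neg (fun hcon => (hq.1 hcon) h)]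
    · rw [if_neg h, sgame, if_pos (hq.2 h)]
  rw [hrhs, snort_eq]
  have i0 : Fin n := ⟨0, hn⟩
  constructor
  · rw [PGame.le_iff_forall_lf]
    constructor
    · rintro ⟨(_ | i), hv⟩
      · apply PGame.lf_of_le_moveLeft (y := ofPair _ _) (i := PUnit.unit)
        exact hA.1
      · apply PGame.lf_of_le_moveLeft (y := ofPair _ _) (i := PUnit.unit)
        exact hGi i
    · intro j
      apply PGame.lf_of_moveRight_le (x := PGame.mk _ _ _ _)
        (j := (⟨some i0, Or.inl rfl⟩ : {v // c0 v = Cell.free ∨ c0 v = Cell.red}))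
      exact (hBi i0).1
  · rw [PGame.le_iff_forall_lf]
    constructor
    · intro i
      apply PGame.lf_of_le_moveLeft (y := PGame.mk _ _ _ _)
        (i := (⟨none, Or.inr rfl⟩ : {v // c0 v = Cell.free ∨ c0 v = Cell.blue}))
      exact hA.2
    · rintro ⟨(_ | i), hv⟩
      · rcases hv with h | h <;> exact Cell.noConfusion h
      · apply PGame.lf_of_moveRight_le (x := ofPair _ _) (j := PUnit.unit)
        exact (hBi i).2
end SnortFormal
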